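/- Let A be an abelian group (written additively, regarded as a ℤ-module) and let x, y ∈ A be such that for all integers a, b, the equality a·x = b·y implies a = 0 and b = 0. Then the image of (x, y) under the canonical alternating map into the second exterior power ∧²ℤ A is nonzero. -/

import Mathlib

/-!
Since `a • x = b • y` forces `a = b = 0`, the family `![x, y]` is `ℤ`-linearly independent, so
`x` and `y` form a basis of the subgroup they span. As `ℚ` is divisible, hence an injective
`ℤ`-module, the two coordinate functionals of that basis extend to `φ ψ : A →ₗ[ℤ] ℚ`. The
determinant `(u, v) ↦ φ u * ψ v - φ v * ψ u` is a `ℤ`-alternating form taking the value `1` at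
`(x, y)`; it factors through `⋀²_ℤ A`, so `x ∧ y ≠ 0`.
-/

/-- The image of a pair `(x, y)` under the canonical alternating bilinear map
`M × M → ⋀²_R M` into the second exterior power of `M` over `R`. -/
noncomputable def wedgePair (R M : Type*) [CommRing R] [AddCommGroup M] [Module R M]
    (x y : M) : ⋀[R]^2 M :=
  ⟨ExteriorAlgebra.ιMulti R 2 ![x, y],
    ExteriorAlgebra.ιMulti_range R 2 (Set.mem_range_self _)⟩

namespace AlternatingMap

variable (R : Type*) {A M N ι : Type*} [Semiring R] [Semiring A] [SMul R A]
  [AddCommMonoid M] [AddCommMonoid N] [Module R M] [Module R N] [Module A M] [Module A N]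
  [IsScalarTower R A M] [IsScalarTower R A N]

def restrictScalars (f : M [⋀^ι]→ₗ[A] N) : M [⋀^ι]→ₗ[R] N where
  toMultilinearMap := f.toMultilinearMap.restrictScalars R
  map_eq_zero_of_eq' := f.map_eq_zero_of_eq

end AlternatingMap

namespace LinearMap

variable {R S M : Type*} [CommSemiring R] [CommRing S] [Algebra R S] [AddCommMonoid M]
  [Module R M]

noncomputable def wedgeForm (φ ψ : M →ₗ[R] S) : M [⋀^Fin 2]→ₗ[R] S :=
  ((Pi.basisFun S (Fin 2)).det.restrictScalars R).compLinearMap (LinearMap.pi ![φ, ψ])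

theorem wedgeForm_apply (φ ψ : M →ₗ[R] S) (v : Fin 2 → M) :
    φ.wedgeForm ψ v = φ (v 0) * ψ (v 1) - φ (v 1) * ψ (v 0) := by
  change (Pi.basisFun S (Fin 2)).det (fun i => pi ![φ, ψ] (v i)) = _
  rw [Module.Basis.det_apply, Matrix.det_fin_two]
  simp [Module.Basis.toMatrix_apply]

end LinearMap

theorem LinearIndependent.exists_linearMap_apply_eq {R M Q ι : Type*} [CommRing R]
    [AddCommGroup M] [Module R M] [AddCommGroup Q] [Module R Q] (hQ : Module.Baer R Q)
    {v : ι → M} (hv : LinearIndependent R v) (c : ι → Q) :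
    ∃ φ : M →ₗ[R] Q, ∀ i, φ (v i) = c i := by
  obtain ⟨φ, hφ⟩ := hQ.extension_property _ (Submodule.injective_subtype _)
    ((Module.Basis.span hv).constr R c)
  refine ⟨φ, fun i => ?_⟩
  have := LinearMap.congr_fun hφ (Module.Basis.span hv i)
  rwa [LinearMap.comp_apply, Module.Basis.constr_basis, Submodule.subtype_apply,
    Module.Basis.span_apply] at this

theorem wedgePair_ne_zero_of_alternatingMap {R M N : Type*} [CommRing R] [AddCommGroup M]
    [Module R M] [AddCommGroup N] [Module R N] {x y : M} (f : M [⋀^Fin 2]→ₗ[R] N)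
    (hf : f ![x, y] ≠ 0) : wedgePair R M x y ≠ 0 := by
  intro h
  apply hf
  rw [← exteriorPower.alternatingMapLinearEquiv_apply_ιMulti]
  exact (congrArg _ h).trans (map_zero _)

/-- If `x, y` are elements of an abelian group `A` (regarded as a `ℤ`-module)
such that `a • x = b • y` (for integers `a, b`) only when `a = b = 0`, then the
image of `(x, y)` under the canonical alternating map into the second exterior
power `⋀²_ℤ A` is nonzero. -/
theorem wedge_ne_zero_of_independent (A : Type*) [AddCommGroup A] (x y : A)
    (h : ∀ a b : ℤ, a • x = b • y → a = 0 ∧ b = 0) :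
    wedgePair ℤ A x y ≠ 0 := by
  have hxy : LinearIndependent ℤ ![x, y] := LinearIndependent.pair_iff.mpr fun s t hst => by
    obtain ⟨hs, ht⟩ := h s (-t) (by rwa [neg_smul, eq_neg_iff_add_eq_zero])
    exact ⟨hs, neg_eq_zero.mp ht⟩
  have hℚ : Module.Baer ℤ ℚ := .of_divisible ℚ
  obtain ⟨φ, hφ⟩ := hxy.exists_linearMap_apply_eq hℚ ![1, 0]
  obtain ⟨ψ, hψ⟩ := hxy.exists_linearMap_apply_eq hℚ ![0, 1]
  refine wedgePair_ne_zero_of_alternatingMap (φ.wedgeForm ψ) ?_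
  have hφx : φ x = 1 := hφ 0
  have hφy : φ y = 0 := hφ 1
  have hψx : ψ x = 0 := hψ 0
  have hψy : ψ y = 1 := hψ 1
  simp [LinearMap.wedgeForm_apply, hφx, hφy, hψx, hψy]
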